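/- arXiv:1507.02479 — 3 statements merged into one kernel-verified Lean document; each statement's English description precedes it below -/
import Mathlib

section
/- For a CSP instance I with incidence graph B and disjoint variable sets X, Y (with X together with its neighboring constraints connected in B): if S₁ and S₂ are two minimal X–Y separators and S₂ dominates S₁ (i.e., |S₂| ≤ |S₁| and the component of X in B − S₂ strictly contains the component of X in B − S₁), then S₂ disconnects S₁ \ S₂ from Y in B. -/
structure CSPConstraint (V D : Type) where
  scope : List V
  rel : Set (List D)

namespace CSP

variable {V D : Type}

/-- Restriction of a constraint by a partial assignment `α` (variables assigned by `α`
are removed from the scope, tuples inconsistent with `α` are dropped and the assigned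
coordinates are projected away). -/
def restrictC (C : CSPConstraint V D) (α : V → Option D) : CSPConstraint V D where
  scope := C.scope.filter (fun v => (α v).isNone)
  rel := { t | ∃ s ∈ C.rel, s.length = C.scope.length ∧
      (∀ p ∈ C.scope.zip s, ∀ d, α p.1 = some d → p.2 = d) ∧
      t = ((C.scope.zip s).filter (fun p => (α p.1).isNone)).map Prod.snd }

/-- `α` is a partial assignment defined on exactly the variable set `S`. -/
def OnSet (α : V → Option D) (S : Set V) : Prop := ∀ v, (α v).isSome ↔ v ∈ S

def restrictI (I : Set (CSPConstraint V D)) (α : V → Option D) : Set (CSPConstraint V D) :=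
  (fun C => restrictC C α) '' I

def varsOf (I : Set (CSPConstraint V D)) : Set V := ⋃ C ∈ I, {v | v ∈ C.scope}

/-- A constraint language: a set of (arity, relation) pairs over domain `D`. -/
abbrev Language (D : Type) := Set (ℕ × Set (List D))

def inLang (Γ : Language D) (C : CSPConstraint V D) : Prop :=
  (C.scope.length, C.rel) ∈ Γ

/-- A language is closed under partial assignments. -/
def ClosedLang (Γ : Language D) : Prop :=
  ∀ (C : CSPConstraint ℕ D) (α : ℕ → Option D), inLang Γ C → inLang Γ (restrictC C α)

/-- Two constraints of `I` share a variable outside `X` (edge of the incidence graph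
with the variables of `X` deleted, contracted to constraints). -/
def Linked (I : Set (CSPConstraint V D)) (X : Set V) (C₁ C₂ : CSPConstraint V D) : Prop :=
  C₁ ∈ I ∧ C₂ ∈ I ∧ ∃ v, v ∉ X ∧ v ∈ C₁.scope ∧ v ∈ C₂.scope

/-- Same connected component of the incidence graph of `I` minus the variables `X`. -/
def SameComp (I : Set (CSPConstraint V D)) (X : Set V) :
    CSPConstraint V D → CSPConstraint V D → Prop :=
  Relation.ReflTransGen (Linked I X)

/-- Membership in the scattered class `CSP(Γ₁) ⊎ ⋯ ⊎ CSP(Γ_d)` : every connected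
component of the incidence graph lies entirely in some `CSP(Γ i)`. -/
def Scattered {d : ℕ} (Γ : Fin d → Language D) (I : Set (CSPConstraint V D)) : Prop :=
  ∀ C ∈ I, ∃ i : Fin d, ∀ C' ∈ I, SameComp I ∅ C C' → inLang (Γ i) C'

/-- `B` is a strong backdoor of `I` into the scattered class. -/
def StrongBackdoor {d : ℕ} (Γ : Fin d → Language D) (I : Set (CSPConstraint V D))
    (B : Set V) : Prop :=
  ∀ α : V → Option D, OnSet α B → Scattered Γ (restrictI I α)

/-- A set of at most `d` constraints forbidden with respect to `S`. -/
def Forbidden {d : ℕ} (Γ : Fin d → Language D) (Cs : Set (CSPConstraint V D))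
    (S : Set V) : Prop :=
  Cs.Finite ∧ Cs.ncard ≤ d ∧ ∃ τ : V → Option D, OnSet τ S ∧
    ∀ i : Fin d, ∃ C ∈ Cs, ¬ inLang (Γ i) (restrictC C τ)

def Satisfies (β : V → D) (C : CSPConstraint V D) : Prop := C.scope.map β ∈ C.rel

/-- The incidence graph of an instance: variables on one side, constraints on the other. -/
def incGraph (I : Set (CSPConstraint V D)) : SimpleGraph (V ⊕ CSPConstraint V D) where
  Adj a b := ∃ v C, C ∈ I ∧ v ∈ C.scope ∧
    ((a = Sum.inl v ∧ b = Sum.inr C) ∨ (a = Sum.inr C ∧ b = Sum.inl v))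
  symm := by
    constructor
    rintro a b ⟨v, C, hC, hv, h⟩
    exact ⟨v, C, hC, hv, by tauto⟩
  loopless := by
    constructor
    rintro a ⟨v, C, -, -, (⟨h1, h2⟩ | ⟨h1, h2⟩)⟩ <;> subst h1 <;> simp at h2

/-- Reachability in a graph avoiding the vertex set `T`. -/
def ReachAvoid {W : Type} (G : SimpleGraph W) (T : Set W) (a b : W) : Prop :=
  a ∉ T ∧ b ∉ T ∧ Relation.ReflTransGen (fun x y => G.Adj x y ∧ x ∉ T ∧ y ∉ T) a b

/-- `R(X,T)` : the vertices reachable from `X` after deleting `T`. -/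
def RSet {W : Type} (G : SimpleGraph W) (X T : Set W) : Set W :=
  {v | ∃ x ∈ X, ReachAvoid G T x v}

def IsXYSep {W : Type} (G : SimpleGraph W) (X Y S : Set W) : Prop :=
  Disjoint S (X ∪ Y) ∧ ∀ y ∈ Y, y ∉ RSet G X S

/-- `S₁` covers `S₂` with respect to `X`. -/
def Covers {W : Type} (G : SimpleGraph W) (X S₁ S₂ : Set W) : Prop :=
  RSet G X S₂ ⊂ RSet G X S₁

def Dominates {W : Type} (G : SimpleGraph W) (X S₁ S₂ : Set W) : Prop :=
  S₁.ncard ≤ S₂.ncard ∧ Covers G X S₁ S₂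

def MinimalSep {W : Type} (G : SimpleGraph W) (X Y S : Set W) : Prop :=
  IsXYSep G X Y S ∧ ∀ S' ⊂ S, ¬ IsXYSep G X Y S'

def ImportantSep {W : Type} (G : SimpleGraph W) (X Y S : Set W) : Prop :=
  MinimalSep G X Y S ∧ ¬ ∃ S', IsXYSep G X Y S' ∧ S' ≠ S ∧ Dominates G X S' S

/-- `X` is a `W₁`–`W₂` separator (of variables) in `B_S`, the incidence graph with the
variables of `S` deleted. -/
def SepIn (I : Set (CSPConstraint V D)) (S W₁ W₂ X : Set V) : Prop :=
  Disjoint X (S ∪ W₁ ∪ W₂) ∧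
  ∀ w₁ ∈ W₁, ∀ w₂ ∈ W₂,
    ¬ ReachAvoid (incGraph I) (Sum.inl '' (S ∪ X)) (Sum.inl w₁) (Sum.inl w₂)

/-- `R_{B_S}(W₁,X)` : vertices of the incidence graph reachable from `W₁` in `B_S − X`. -/
def Region (I : Set (CSPConstraint V D)) (S W₁ X : Set V) : Set (V ⊕ CSPConstraint V D) :=
  RSet (incGraph I) (Sum.inl '' W₁) (Sum.inl '' (S ∪ X))

/-- The sub-instance `I[R_{B_S}[W₁,X] ∪ S]`. -/
def SubInst (I : Set (CSPConstraint V D)) (S W₁ X : Set V) : Set (CSPConstraint V D) :=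
  {C | C ∈ I ∧ ∀ v ∈ C.scope, v ∈ S ∨ v ∈ X ∨ Sum.inl v ∈ Region I S W₁ X}

/-- The separator `X` in `B_S` is `ℓ`-good. -/
def Good {d : ℕ} (Γ : Fin d → Language D) (I : Set (CSPConstraint V D))
    (S W₁ X : Set V) (ℓ : ℕ) : Prop :=
  ∃ K : Set V, K.Finite ∧ K.ncard ≤ ℓ ∧ StrongBackdoor Γ (SubInst I S W₁ X) (K ∪ X ∪ S)

/-- A solution of the extended backdoor compression instance `(I,k,S,W)` : a strong
backdoor of size at most `k` containing `S` and disjoint from `W`. -/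
def Solution {d : ℕ} (Γ : Fin d → Language D) (I : Set (CSPConstraint V D))
    (k : ℕ) (S W Z : Set V) : Prop :=
  S ⊆ Z ∧ Disjoint Z W ∧ Z.Finite ∧ Z.ncard ≤ k ∧ StrongBackdoor Γ I Z

end CSP

/-- `X` together with its neighbouring constraints, in the incidence graph of `I`. -/
def NXSet {V D : Type} (I : Set (CSPConstraint V D)) (X : Set V) :
    Set (V ⊕ CSPConstraint V D) :=
  Sum.inl '' X ∪ {a | ∃ C ∈ I, a = Sum.inr C ∧ ∃ v ∈ X, v ∈ C.scope}


/-!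
By minimality of `S₁`, every `v ∈ S₁` has a neighbour in `R(X,S₁)`, hence in the larger
`R(X,S₂)`. If moreover `v ∉ S₂`, then `v` itself lies in `R(X,S₂)`, so a path from `v` to `Y`
avoiding `S₂` would make `S₂` fail to separate `X` from `Y`.
-/

namespace CSP

variable {W : Type} {G : SimpleGraph W} {X Y S T : Set W} {s w a b : W}

lemma mem_rSet_of_reachAvoid (hw : w ∈ RSet G X T) (hwb : ReachAvoid G T w b) :
    b ∈ RSet G X T := by
  obtain ⟨x, hx, hxT, -, hxw⟩ := hw
  exact ⟨x, hx, hxT, hwb.2.1, hxw.trans hwb.2.2⟩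

lemma mem_rSet_of_adj (hw : w ∈ RSet G X T) (hadj : G.Adj w a) (ha : a ∉ T) :
    a ∈ RSet G X T := by
  obtain ⟨x, hx, hxT, hwT, hxw⟩ := hw
  exact ⟨x, hx, hxT, ha, hxw.tail ⟨hadj, hwT, ha⟩⟩

lemma rSet_diff_singleton_subset (hSX : Disjoint S X) (hs : ∀ w ∈ RSet G X S, ¬ G.Adj w s) :
    RSet G X (S \ {s}) ⊆ RSet G X S := by
  rintro b ⟨x, hx, -, -, hxb⟩
  have hxS : x ∉ S := hSX.notMem_of_mem_right hx
  induction hxb with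
  | refl => exact ⟨x, hx, hxS, hxS, .refl⟩
  | @tail b c _ hbc hxb =>
    obtain ⟨hadj, -, hc⟩ := hbc
    have hcS : c ∉ S := by
      intro hcS
      obtain rfl : c = s := by_contra fun hne => hc ⟨hcS, hne⟩
      exact hs b hxb hadj
    exact mem_rSet_of_adj hxb hadj hcS

lemma MinimalSep.exists_adj_mem_rSet (h : MinimalSep G X Y S) (hs : s ∈ S) :
    ∃ w ∈ RSet G X S, G.Adj w s := by
  by_contra! hno
  have hSX : Disjoint S X := h.1.1.mono_right Set.subset_union_left
  refine h.2 (S \ {s}) (Set.sdiff_singleton_ssubset.mpr hs)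
    ⟨h.1.1.mono_left Set.sdiff_subset, fun y hy hyR => ?_⟩
  exact h.1.2 y hy (rSet_diff_singleton_subset hSX hno hyR)

theorem MinimalSep.not_reachAvoid_of_rSet_subset {S₁ S₂ : Set W} {v y : W}
    (h₁ : MinimalSep G X Y S₁) (h₂ : IsXYSep G X Y S₂) (hR : RSet G X S₁ ⊆ RSet G X S₂)
    (hv : v ∈ S₁ \ S₂) (hy : y ∈ Y) : ¬ ReachAvoid G S₂ v y := by
  intro hvy
  obtain ⟨w, hw, hadj⟩ := h₁.exists_adj_mem_rSet hv.1
  exact h₂.2 y hy (mem_rSet_of_reachAvoid (mem_rSet_of_adj (hR hw) hadj hv.2) hvy)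

end CSP

theorem stmt9_general {V D : Type} (I : Set (CSPConstraint V D)) (X Y : Set V)
    (S₁ S₂ : Set V)
    (h1 : CSP.MinimalSep (CSP.incGraph I) (Sum.inl '' X) (Sum.inl '' Y) (Sum.inl '' S₁))
    (h2 : CSP.MinimalSep (CSP.incGraph I) (Sum.inl '' X) (Sum.inl '' Y) (Sum.inl '' S₂))
    (hdom : CSP.Dominates (CSP.incGraph I) (Sum.inl '' X) (Sum.inl '' S₂) (Sum.inl '' S₁)) :
    ∀ v ∈ S₁ \ S₂, ∀ y ∈ Y,
      ¬ CSP.ReachAvoid (CSP.incGraph I) (Sum.inl '' S₂) (Sum.inl v) (Sum.inl y) := by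
  intro v hv y hy
  exact h1.not_reachAvoid_of_rSet_subset h2.1 hdom.2.subset
    ⟨Set.mem_image_of_mem _ hv.1, Sum.inl_injective.mem_set_image.not.mpr hv.2⟩
    (Set.mem_image_of_mem _ hy)

/-- in the incidence graph, if `S₁`, `S₂` are minimal `X`–`Y` separators
(of variables) and `S₂` dominates `S₁`, then `S₂` disconnects `S₁ \ S₂` from `Y`. -/
theorem stmt9 {V D : Type} (I : Set (CSPConstraint V D)) (X Y : Set V)
    (hdisj : Disjoint X Y)
    (hconn : ∀ a ∈ NXSet I X, ∀ b ∈ NXSet I X,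
      CSP.ReachAvoid (CSP.incGraph I) (NXSet I X)ᶜ a b)
    (S₁ S₂ : Set V)
    (h1 : CSP.MinimalSep (CSP.incGraph I) (Sum.inl '' X) (Sum.inl '' Y) (Sum.inl '' S₁))
    (h2 : CSP.MinimalSep (CSP.incGraph I) (Sum.inl '' X) (Sum.inl '' Y) (Sum.inl '' S₂))
    (hdom : CSP.Dominates (CSP.incGraph I) (Sum.inl '' X) (Sum.inl '' S₂) (Sum.inl '' S₁)) :
    ∀ v ∈ S₁ \ S₂, ∀ y ∈ Y,
      ¬ CSP.ReachAvoid (CSP.incGraph I) (Sum.inl '' S₂) (Sum.inl v) (Sum.inl y) :=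
  stmt9_general I X Y S₁ S₂ h1 h2 hdom
end

section
/- In any graph, for disjoint vertex sets X and Y with the closed neighborhood of X connected, and for every k ≥ 0, there are at most 4^k important X–Y separators of size at most k. -/
namespace SepTools

variable {W : Type}

/-- Reachability in a graph avoiding the vertex set `T`. -/
def ReachAvoid (G : SimpleGraph W) (T : Set W) (a b : W) : Prop :=
  a ∉ T ∧ b ∉ T ∧ Relation.ReflTransGen (fun x y => G.Adj x y ∧ x ∉ T ∧ y ∉ T) a b

/-- `R(X,T)` : the vertices reachable from `X` after deleting `T`. -/
def RSet (G : SimpleGraph W) (X T : Set W) : Set W := {v | ∃ x ∈ X, ReachAvoid G T x v}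

/-- `S` is an `X`–`Y` separator. -/
def IsXYSep (G : SimpleGraph W) (X Y S : Set W) : Prop :=
  Disjoint S (X ∪ Y) ∧ ∀ y ∈ Y, y ∉ RSet G X S

/-- `S₁` covers `S₂` with respect to `X`. -/
def Covers (G : SimpleGraph W) (X S₁ S₂ : Set W) : Prop :=
  RSet G X S₂ ⊂ RSet G X S₁

/-- `S₁` dominates `S₂` with respect to `X`. -/
def Dominates (G : SimpleGraph W) (X S₁ S₂ : Set W) : Prop :=
  S₁.ncard ≤ S₂.ncard ∧ Covers G X S₁ S₂

def MinimalSep (G : SimpleGraph W) (X Y S : Set W) : Prop :=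
  IsXYSep G X Y S ∧ ∀ S' ⊂ S, ¬ IsXYSep G X Y S'

def ImportantSep (G : SimpleGraph W) (X Y S : Set W) : Prop :=
  MinimalSep G X Y S ∧ ¬ ∃ S', IsXYSep G X Y S' ∧ S' ≠ S ∧ Dominates G X S' S

/-- The closed neighbourhood of `X`. -/
def ClosedNbhd (G : SimpleGraph W) (X : Set W) : Set W :=
  X ∪ {v | ∃ x ∈ X, G.Adj x v}

/-- The closed neighbourhood of `X` is connected (within itself). -/
def NbhdConnected (G : SimpleGraph W) (X : Set W) : Prop :=
  ∀ a ∈ ClosedNbhd G X, ∀ b ∈ ClosedNbhd G X, ReachAvoid G (ClosedNbhd G X)ᶜ a b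

end SepTools

/-!
An important separator `S` of size at most `k` is counted by branching on one vertex `v` of a
minimum separator `Sm` that is furthest from `X`; `v` is adjacent to the reach `A` of `Sm`.
Either `v ∈ S`, and `S \ {v}` is important once `v` is isolated (so `k` drops by one and the
minimum separator size `λ` by at most one), or `v ∉ S`. In the latter case the submodularity of
the vertex boundary shows that the reach of `S` contains `A`, so `S` stays important for the
source `A ∪ {v}`, for which `λ` is strictly larger since `Sm` was furthest. Hence the measure
`2k - λ` drops in both branches, which bounds the count by `2 ^ (2k - λ) ≤ 4 ^ k`.
-/

namespace SepTools

variable {W : Type} {G : SimpleGraph W} {X X' Y S S' T T' : Set W} {v : W}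

theorem mem_RSet_of_mem {x : W} (hx : x ∈ X) (hxT : x ∉ T) : x ∈ RSet G X T :=
  ⟨x, hx, hxT, hxT, .refl⟩

theorem notMem_of_mem_RSet (hv : v ∈ RSet G X T) : v ∉ T := by
  obtain ⟨_, _, -, hvT, -⟩ := hv
  exact hvT

theorem RSet_adj {w : W} (hv : v ∈ RSet G X T) (hvw : G.Adj v w) (hw : w ∉ T) :
    w ∈ RSet G X T := by
  obtain ⟨x, hx, hxT, hvT, hxv⟩ := hv
  exact ⟨x, hx, hxT, hw, hxv.tail ⟨hvw, hvT, hw⟩⟩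

theorem RSet_subset_of_adj_closed {A : Set W} (hXA : X ⊆ A)
    (hA : ∀ a ∈ A, ∀ w, G.Adj a w → w ∉ T → w ∈ A) : RSet G X T ⊆ A := by
  rintro v ⟨x, hx, -, -, hxv⟩
  induction hxv with
  | refl => exact hXA hx
  | tail _ hstep ih => exact hA _ ih _ hstep.1 hstep.2.2

theorem RSet_mono_left (h : X ⊆ X') : RSet G X T ⊆ RSet G X' T :=
  fun _ ⟨x, hx, hxv⟩ => ⟨x, h hx, hxv⟩

theorem RSet_subset_RSet_of_disjoint (h : Disjoint (RSet G X T) T') :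
    RSet G X T ⊆ RSet G X T' := by
  rintro v ⟨x, hx, hxT, hvT, hxv⟩
  induction hxv with
  | refl => exact mem_RSet_of_mem hx (h.notMem_of_mem_left (mem_RSet_of_mem hx hxT))
  | tail hxu hstep ih =>
    exact RSet_adj (ih hstep.2.1) hstep.1 (h.notMem_of_mem_left ⟨x, hx, hxT, hvT, hxu.tail hstep⟩)

theorem RSet_eq_of_subset (hXX' : X ⊆ X') (hX' : X' ⊆ RSet G X T) : RSet G X' T = RSet G X T := by
  refine (RSet_mono_left hXX').antisymm' ?_
  rintro w ⟨x', hx', hx'w⟩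
  obtain ⟨x, hx, hxx'⟩ := hX' hx'
  exact ⟨x, hx, hxx'.1, hx'w.2.1, hxx'.2.2.trans hx'w.2.2⟩

theorem RSet_deleteIncidenceSet (hvX : v ∉ X) :
    RSet (G.deleteIncidenceSet v) X T = RSet G X (insert v T) := by
  have hstep : (fun a b => (G.deleteIncidenceSet v).Adj a b ∧ a ∉ T ∧ b ∉ T) =
      fun a b => G.Adj a b ∧ a ∉ insert v T ∧ b ∉ insert v T := by
    ext a b
    simp only [SimpleGraph.deleteIncidenceSet_adj, Set.mem_insert_iff]
    tauto
  ext w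
  simp only [RSet, ReachAvoid, hstep, Set.mem_ofPred_eq, Set.mem_insert_iff, not_or]
  refine exists_congr fun x => and_congr_right fun hx => ?_
  have hxv : x ≠ v := fun h => hvX (h ▸ hx)
  constructor
  · rintro ⟨hxT, hwT, hxw⟩
    refine ⟨⟨hxv, hxT⟩, ⟨?_, hwT⟩, hxw⟩
    rintro rfl
    rcases (Relation.ReflTransGen.cases_tail_iff _ _ _).1 hxw with rfl | ⟨_, -, -, -, hw⟩
    exacts [hxv rfl, hw.1 rfl]
  · rintro ⟨⟨-, hxT⟩, ⟨-, hwT⟩, hxw⟩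
    exact ⟨hxT, hwT, hxw⟩

def vertexBoundary (G : SimpleGraph W) (A : Set W) : Set W :=
  {v | v ∉ A ∧ ∃ a ∈ A, G.Adj a v}

theorem vertexBoundary_RSet_subset : vertexBoundary G (RSet G X T) ⊆ T := by
  rintro v ⟨hvR, a, ha, hav⟩
  by_contra hvT
  exact hvR (RSet_adj ha hav hvT)

theorem RSet_vertexBoundary_subset {A : Set W} (hXA : X ⊆ A) :
    RSet G X (vertexBoundary G A) ⊆ A :=
  RSet_subset_of_adj_closed hXA fun a ha _ haw hw => by_contra fun hwA => hw ⟨hwA, a, ha, haw⟩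

theorem RSet_subset_RSet_vertexBoundary {A : Set W} (h : RSet G X T ⊆ A) :
    RSet G X T ⊆ RSet G X (vertexBoundary G A) :=
  RSet_subset_RSet_of_disjoint (Set.disjoint_left.2 fun _ hv hvb => hvb.1 (h hv))

theorem vertexBoundary_union_subset {A B : Set W} :
    vertexBoundary G (A ∪ B) ⊆ vertexBoundary G A ∪ vertexBoundary G B := by
  rintro v ⟨hv, a, ha | ha, hav⟩
  · exact .inl ⟨fun h => hv (.inl h), a, ha, hav⟩
  · exact .inr ⟨fun h => hv (.inr h), a, ha, hav⟩

theorem vertexBoundary_inter_subset {A B : Set W} :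
    vertexBoundary G (A ∩ B) ⊆ vertexBoundary G A ∪ vertexBoundary G B := by
  rintro v ⟨hv, a, ha, hav⟩
  by_cases hvA : v ∈ A
  · exact .inr ⟨fun hvB => hv ⟨hvA, hvB⟩, a, ha.2, hav⟩
  · exact .inl ⟨hvA, a, ha.1, hav⟩

theorem ncard_vertexBoundary_union_add_inter_le [Finite W] (A B : Set W) :
    (vertexBoundary G (A ∪ B)).ncard + (vertexBoundary G (A ∩ B)).ncard ≤
      (vertexBoundary G A).ncard + (vertexBoundary G B).ncard := by
  have hinter : vertexBoundary G (A ∪ B) ∩ vertexBoundary G (A ∩ B) ⊆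
      vertexBoundary G A ∩ vertexBoundary G B := by
    rintro v ⟨⟨hv, -⟩, -, a, ha, hav⟩
    exact ⟨⟨fun h => hv (.inl h), a, ha.1, hav⟩, fun h => hv (.inr h), a, ha.2, hav⟩
  rw [← Set.ncard_union_add_ncard_inter (vertexBoundary G (A ∪ B)),
    ← Set.ncard_union_add_ncard_inter (vertexBoundary G A)]
  exact add_le_add
    (Set.ncard_le_ncard (Set.union_subset vertexBoundary_union_subset vertexBoundary_inter_subset))
    (Set.ncard_le_ncard hinter)

theorem IsXYSep.subset_RSet (hS : IsXYSep G X Y S) : X ⊆ RSet G X S :=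
  fun _ hx => mem_RSet_of_mem hx (hS.1.notMem_of_mem_right (.inl hx))

theorem IsXYSep.disjoint_RSet (hS : IsXYSep G X Y S) : Disjoint (RSet G X S) Y :=
  Set.disjoint_right.2 hS.2

theorem IsXYSep.mono_left (hS : IsXYSep G X' Y S) (hXX' : X ⊆ X') : IsXYSep G X Y S :=
  ⟨hS.1.mono_right (Set.union_subset_union_left Y hXX'),
    fun y hy hyR => hS.2 y hy (RSet_mono_left hXX' hyR)⟩

theorem isXYSep_vertexBoundary {A : Set W} (hXA : X ⊆ A) (hAY : Disjoint A Y)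
    (hY : Disjoint (vertexBoundary G A) Y) : IsXYSep G X Y (vertexBoundary G A) := by
  refine ⟨Set.disjoint_union_right.2 ⟨Set.disjoint_right.2 fun x hx hxb => hxb.1 (hXA hx), hY⟩, ?_⟩
  exact fun y hy hyR => hAY.notMem_of_mem_right hy (RSet_vertexBoundary_subset hXA hyR)

theorem isXYSep_deleteIncidenceSet_iff (hv : v ∉ X ∪ Y) :
    IsXYSep (G.deleteIncidenceSet v) X Y S ↔ IsXYSep G X Y (insert v S) := by
  rw [IsXYSep, IsXYSep, RSet_deleteIncidenceSet fun h => hv (.inl h), Set.disjoint_insert_left]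
  exact ⟨fun h => ⟨⟨hv, h.1⟩, h.2⟩, fun h => ⟨h.1.2, h.2⟩⟩

theorem MinimalSep.vertexBoundary_RSet (hS : MinimalSep G X Y S) :
    vertexBoundary G (RSet G X S) = S := by
  have hsub : vertexBoundary G (RSet G X S) ⊆ S := vertexBoundary_RSet_subset
  refine hsub.eq_of_not_ssubset fun hlt => hS.2 _ hlt ?_
  exact isXYSep_vertexBoundary hS.1.subset_RSet hS.1.disjoint_RSet
    (hS.1.1.mono_left hsub |>.mono_right Set.subset_union_right)

theorem importantSep_iff :
    ImportantSep G X Y S ↔ MinimalSep G X Y S ∧ ∀ S', IsXYSep G X Y S' → ¬ Dominates G X S' S := by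
  refine and_congr_right fun _ => ⟨fun h S' hS' hdom => h ⟨S', hS', ?_, hdom⟩, ?_⟩
  · rintro rfl
    exact hdom.2.ne rfl
  · rintro h ⟨S', hS', -, hdom⟩
    exact h S' hS' hdom

def IsMinimumSep (G : SimpleGraph W) (X Y S : Set W) : Prop :=
  IsXYSep G X Y S ∧ ∀ S', IsXYSep G X Y S' → S.ncard ≤ S'.ncard

theorem MinimalSep.eq_empty_of_isXYSep_empty (hS : MinimalSep G X Y S) (h : IsXYSep G X Y ∅) :
    S = ∅ :=
  Set.not_nonempty_iff_eq_empty.1 fun hne => hS.2 ∅ (Set.empty_ssubset.2 hne) h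

theorem IsMinimumSep.minimalSep [Finite W] (hS : IsMinimumSep G X Y S) : MinimalSep G X Y S :=
  ⟨hS.1, fun S' hlt hS' => (hS.2 S' hS').not_gt (Set.ncard_lt_ncard hlt)⟩

/-- A minimum separator that is furthest from `X`. -/
theorem exists_isMinimumSep_forall_not_dominates [Finite W] (h : ∃ S, IsXYSep G X Y S) :
    ∃ S, IsMinimumSep G X Y S ∧ ∀ S', IsXYSep G X Y S' → ¬ Dominates G X S' S := by
  obtain ⟨S₀, hS₀, hmin⟩ := Set.exists_min_image {S | IsXYSep G X Y S} Set.ncard (Set.toFinite _) h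
  obtain ⟨S, ⟨hS, hSS₀⟩, hmax⟩ :=
    Set.exists_max_image {S | IsXYSep G X Y S ∧ S.ncard ≤ S₀.ncard} (fun S => (RSet G X S).ncard)
      (Set.toFinite _) ⟨S₀, hS₀, le_rfl⟩
  refine ⟨S, ⟨hS, fun S' hS' => hSS₀.trans (hmin S' hS')⟩, fun S' hS' hdom => ?_⟩
  exact (Set.ncard_lt_ncard hdom.2).not_ge (hmax S' ⟨hS', hdom.1.trans hSS₀⟩)

theorem IsXYSep.ncard_lt_of_isXYSep_insert [Finite W] {Sm : Set W} {a : W}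
    (hSm : IsXYSep G X Y Sm) (hSm_far : ∀ S', IsXYSep G X Y S' → ¬ Dominates G X S' Sm)
    (hvA : v ∉ RSet G X Sm) (ha : a ∈ RSet G X Sm) (hav : G.Adj a v)
    (hS : IsXYSep G (insert v (RSet G X Sm)) Y S) : Sm.ncard < S.ncard := by
  have hXS : IsXYSep G X Y S := hS.mono_left (hSm.subset_RSet.trans (Set.subset_insert _ _))
  have hdisj : Disjoint S (insert v (RSet G X Sm)) := hS.1.mono_right Set.subset_union_left
  have hsub : RSet G X Sm ⊆ RSet G X S := RSet_subset_RSet_of_disjoint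
    (hdisj.symm.mono_left (Set.subset_insert _ _))
  have hvS : v ∈ RSet G X S :=
    RSet_adj (hsub ha) hav (hdisj.notMem_of_mem_right (Set.mem_insert _ _))
  refine lt_of_not_ge fun hle => hSm_far S hXS ⟨hle, ?_⟩
  exact ssubset_of_subset_not_subset hsub fun h => hvA (h hvS)

theorem IsMinimumSep.RSet_subset_of_importantSep [Finite W] {Sm : Set W}
    (hSm : IsMinimumSep G X Y Sm) (hS : ImportantSep G X Y S) : RSet G X Sm ⊆ RSet G X S := by
  set A := RSet G X Sm
  set B := RSet G X S
  have hSsep := hS.1.1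
  have hAB_Y : Disjoint (A ∪ B) Y :=
    Set.disjoint_union_left.2 ⟨hSm.1.disjoint_RSet, hSsep.disjoint_RSet⟩
  have hbd_Y : Disjoint (vertexBoundary G A ∪ vertexBoundary G B) Y :=
    Disjoint.mono_left
      (Set.union_subset_union vertexBoundary_RSet_subset vertexBoundary_RSet_subset)
      (Set.disjoint_union_left.2 ⟨hSm.1.1.mono_right Set.subset_union_right,
        hSsep.1.mono_right Set.subset_union_right⟩)
  have hunion : IsXYSep G X Y (vertexBoundary G (A ∪ B)) :=
    isXYSep_vertexBoundary (hSm.1.subset_RSet.trans Set.subset_union_left) hAB_Y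
      (hbd_Y.mono_left vertexBoundary_union_subset)
  have hinter : IsXYSep G X Y (vertexBoundary G (A ∩ B)) :=
    isXYSep_vertexBoundary (Set.subset_inter hSm.1.subset_RSet hSsep.subset_RSet)
      (hAB_Y.mono_left (Set.inter_subset_left.trans Set.subset_union_left))
      (hbd_Y.mono_left vertexBoundary_inter_subset)
  -- `∂(A ∩ B)` is a separator, so submodularity leaves `∂(A ∪ B)` no larger than `S`.
  have hcard : (vertexBoundary G (A ∪ B)).ncard ≤ S.ncard := by
    have := ncard_vertexBoundary_union_add_inter_le (G := G) A B
    have := hSm.2 _ hinter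
    have : (vertexBoundary G A).ncard ≤ Sm.ncard := Set.ncard_le_ncard vertexBoundary_RSet_subset
    have : (vertexBoundary G B).ncard ≤ S.ncard := Set.ncard_le_ncard vertexBoundary_RSet_subset
    omega
  have hA := RSet_subset_RSet_vertexBoundary (G := G) (Set.subset_union_left (s := A) (t := B))
  have hB := RSet_subset_RSet_vertexBoundary (G := G) (Set.subset_union_right (s := A) (t := B))
  by_contra hAB
  exact (importantSep_iff.1 hS).2 _ hunion
    ⟨hcard, ssubset_of_subset_not_subset hB fun h => hAB (hA.trans h)⟩

theorem ImportantSep.of_subset_RSet (hS : ImportantSep G X Y S) (hXX' : X ⊆ X')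
    (hX' : X' ⊆ RSet G X S) : ImportantSep G X' Y S := by
  rw [importantSep_iff] at hS ⊢
  obtain ⟨⟨hSsep, hSmin⟩, hSimp⟩ := hS
  have hR : RSet G X' S = RSet G X S := RSet_eq_of_subset hXX' hX'
  have hsep : IsXYSep G X' Y S := by
    refine ⟨Set.disjoint_union_right.2 ⟨?_, hSsep.1.mono_right Set.subset_union_right⟩, ?_⟩
    · exact Set.disjoint_left.2 fun _ hs hx => notMem_of_mem_RSet (hX' hx) hs
    · exact hR ▸ hSsep.2
  refine ⟨⟨hsep, fun S' hlt hS' => hSmin S' hlt (hS'.mono_left hXX')⟩, fun S' hS' hdom => ?_⟩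
  have hRS' : RSet G X S ⊆ RSet G X S' :=
    RSet_subset_RSet_of_disjoint <|
      Set.disjoint_left.2 fun _ hv => notMem_of_mem_RSet (hdom.2.1 (hR ▸ hv))
  have hR' : RSet G X' S' = RSet G X S' := RSet_eq_of_subset hXX' (hX'.trans hRS')
  have hcov : Covers G X S' S := by
    rw [Covers, ← hR, ← hR']
    exact hdom.2
  exact hSimp S' (hS'.mono_left hXX') ⟨hdom.1, hcov⟩

theorem ImportantSep.deleteIncidenceSet [Finite W] (hS : ImportantSep G X Y S) (hv : v ∈ S) :
    ImportantSep (G.deleteIncidenceSet v) X Y (S \ {v}) := by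
  rw [importantSep_iff] at hS ⊢
  obtain ⟨⟨hSsep, hSmin⟩, hSimp⟩ := hS
  have hvXY : v ∉ X ∪ Y := hSsep.1.notMem_of_mem_left hv
  have hinsert : insert v (S \ {v}) = S := by
    rw [Set.insert_sdiff_singleton, Set.insert_eq_of_mem hv]
  have hR : ∀ S', RSet (G.deleteIncidenceSet v) X S' = RSet G X (insert v S') :=
    fun _ => RSet_deleteIncidenceSet fun h => hvXY (.inl h)
  refine ⟨⟨(isXYSep_deleteIncidenceSet_iff hvXY).2 (by rwa [hinsert]), fun S' hlt hS' => ?_⟩,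
    fun S' hS' hdom => ?_⟩
  · refine hSmin _ ?_ ((isXYSep_deleteIncidenceSet_iff hvXY).1 hS')
    have hvS' : v ∉ S' := fun h => (hlt.1 h).2 rfl
    rw [← hinsert]
    exact (Set.insert_subset_insert_iff hvS').2 hlt.1 |>.ssubset_of_not_subset fun h =>
      hlt.2 fun w hw => ((Set.insert_subset_insert_iff (by simp)).1 h hw)
  · refine hSimp _ ((isXYSep_deleteIncidenceSet_iff hvXY).1 hS') ⟨?_, ?_⟩
    · have := Set.ncard_insert_le v S'
      have := Set.ncard_sdiff_singleton_add_one hv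
      have := hdom.1
      omega
    · simpa only [Covers, hR, hinsert] using hdom.2

def importantSeps (G : SimpleGraph W) (X Y : Set W) (k : ℕ) : Set (Set W) :=
  {S | ImportantSep G X Y S ∧ S.ncard ≤ k}

theorem importantSeps_subset_union [Finite W] {Sm : Set W} {a : W} {k : ℕ}
    (hSm : IsMinimumSep G X Y Sm) (ha : a ∈ RSet G X Sm) (hav : G.Adj a v) :
    importantSeps G X Y k ⊆
      insert v '' importantSeps (G.deleteIncidenceSet v) X Y (k - 1) ∪
        importantSeps G (insert v (RSet G X Sm)) Y k := by
  rintro S ⟨hS, hSk⟩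
  by_cases hvS : v ∈ S
  · refine .inl ⟨S \ {v}, ⟨hS.deleteIncidenceSet hvS, ?_⟩, ?_⟩
    · have := Set.ncard_sdiff_singleton_add_one hvS
      omega
    · rw [Set.insert_sdiff_singleton, Set.insert_eq_of_mem hvS]
  · have hAB := hSm.RSet_subset_of_importantSep hS
    have hvB : v ∈ RSet G X S := RSet_adj (hAB ha) hav hvS
    refine .inr ⟨hS.of_subset_RSet (hSm.1.subset_RSet.trans (Set.subset_insert _ _)) ?_, hSk⟩
    exact Set.insert_subset hvB hAB

theorem ncard_importantSeps_le_two_pow [Finite W] (n : ℕ) :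
    ∀ (k : ℕ) (G : SimpleGraph W) (X : Set W), (∀ S, IsXYSep G X Y S → 2 * k ≤ n + S.ncard) →
      (importantSeps G X Y k).ncard ≤ 2 ^ n := by
  induction n with
  | zero =>
    refine fun k G X hbound => (Set.ncard_le_ncard (t := {∅}) ?_).trans_eq (Set.ncard_singleton _)
    rintro S ⟨hS, hSk⟩
    have := hbound S hS.1.1
    rw [Set.mem_singleton_iff, ← Set.ncard_eq_zero]
    omega
  | succ m ih =>
    intro k G X hbound
    by_cases hsub : importantSeps G X Y k ⊆ {∅}
    · exact ((Set.ncard_le_ncard hsub).trans_eq (Set.ncard_singleton _)).trans Nat.one_le_two_pow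
    obtain ⟨S₁, ⟨hS₁, -⟩, hS₁ne⟩ := Set.not_subset.1 hsub
    obtain ⟨Sm, hSm, hSm_far⟩ := exists_isMinimumSep_forall_not_dominates ⟨S₁, hS₁.1.1⟩
    obtain ⟨v, hv⟩ : Sm.Nonempty := Set.nonempty_iff_ne_empty.2 fun hSm_empty =>
      hS₁ne (hS₁.1.eq_empty_of_isXYSep_empty (hSm_empty ▸ hSm.1))
    obtain ⟨hvA, a, ha, hav⟩ : v ∈ vertexBoundary G (RSet G X Sm) :=
      hSm.minimalSep.vertexBoundary_RSet.symm ▸ hv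
    have hdelete := ih (k - 1) (G.deleteIncidenceSet v) X fun S hS => by
      have := hbound _ ((isXYSep_deleteIncidenceSet_iff (hSm.1.1.notMem_of_mem_left hv)).1 hS)
      have := Set.ncard_insert_le v S
      omega
    have hextend := ih k G (insert v (RSet G X Sm)) fun S hS => by
      have := hbound Sm hSm.1
      have := hSm.1.ncard_lt_of_isXYSep_insert hSm_far hvA ha hav hS
      omega
    calc _ ≤ _ := Set.ncard_le_ncard (importantSeps_subset_union hSm ha hav)
      _ ≤ _ := Set.ncard_union_le _ _
      _ ≤ 2 ^ m + 2 ^ m := add_le_add ((Set.ncard_image_le).trans hdelete) hextend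
      _ = 2 ^ (m + 1) := by ring

end SepTools

theorem stmt10_general {W : Type} [Fintype W] (G : SimpleGraph W) (X Y : Set W) (k : ℕ) :
    {S : Set W | SepTools.ImportantSep G X Y S ∧ S.ncard ≤ k}.ncard ≤ 4 ^ k := by
  rw [show 4 ^ k = 2 ^ (2 * k) by rw [pow_mul]; norm_num]
  exact SepTools.ncard_importantSeps_le_two_pow (2 * k) k G X fun _ _ => Nat.le_add_right _ _

/-- for disjoint `X`, `Y` with the closed neighbourhood of `X` connected,
there are at most `4^k` important `X`–`Y` separators of size at most `k`. -/
theorem stmt10 {W : Type} [Fintype W] (G : SimpleGraph W) (X Y : Set W)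
    (hdisj : Disjoint X Y) (hconn : SepTools.NbhdConnected G X) (k : ℕ) :
    {S : Set W | SepTools.ImportantSep G X Y S ∧ S.ncard ≤ k}.ncard ≤ 4 ^ k :=
  stmt10_general G X Y k
end

section
/- Let (I,k,S,W₁,W₂) be an instance of extended backdoor compression in which S already disconnects W₁ from W₂ in the incidence graph B, let Z be a solution, and let Z' = Z ∩ R_B[W₁,S]. Then Z' is a strong backdoor for the sub-instance I' = I[R_B[W₁,S]] into the scattered class, and conversely, for any strong backdoor Z'' of I' of size at most |Z'| containing S, the set (Z \ Z') ∪ Z'' is a solution for the original instance. -/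
namespace List

theorem map_fst_filter_zip {α β : Type*} (p : α → Bool) {l : List α} {s : List β}
    (h : l.length ≤ s.length) :
    ((l.zip s).filter (fun q => p q.1)).map Prod.fst = l.filter p := by
  conv_rhs => rw [← List.map_fst_zip h, List.filter_map]
  rfl

theorem zip_filter_map_snd {α β : Type*} (p : α → Bool) {l : List α} {s : List β}
    (h : l.length ≤ s.length) :
    (l.filter p).zip (((l.zip s).filter (fun q => p q.1)).map Prod.snd)
      = (l.zip s).filter (fun q => p q.1) := by
  rw [← map_fst_filter_zip p h, ← List.unzip_fst, ← List.unzip_snd, List.zip_unzip]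

end List

/-- The variables in the component(s) of `W₁` in the incidence graph minus `S`. -/
def VReg {V D : Type} (I : Set (CSPConstraint V D)) (S W₁ : Set V) : Set V :=
  {v | ∃ w ∈ W₁, CSP.ReachAvoid (CSP.incGraph I) (Sum.inl '' S) (Sum.inl w) (Sum.inl v)}

/-! Assigning the variables of `S` disconnects the constraints of `I' = I[R ∪ S]`, `R` the
region of `W₁`, from the rest of `I`. An assignment of `Z' = Z ∩ (R ∪ S)` extends arbitrarily
to one of `Z`, which agrees with it on `I'`, and scatteredness passes to sub-instances.
Conversely, an assignment of `(Z \ Z') ∪ Z''` agrees on `I'` with its restriction to `Z''`,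
and on the rest of `I` it is an assignment of `Z` followed by a further restriction, which
preserves scatteredness since the languages are closed under partial assignments. The two
halves share no unassigned variable, so together they form a scattered instance. -/

namespace CSP

variable {V V' D : Type}

attribute [ext] CSPConstraint

theorem restrictC_scope_length (C : CSPConstraint V D) (α : V → Option D) :
    (restrictC C α).scope.length = ((C.scope.map α).filter Option.isNone).length := by
  simp only [restrictC, List.filter_map, List.length_map]
  rfl

theorem restrictC_rel (C : CSPConstraint V D) (α : V → Option D) :
    (restrictC C α).rel = {t | ∃ s ∈ C.rel, s.length = (C.scope.map α).length ∧
      (∀ p ∈ (C.scope.map α).zip s, ∀ d, p.1 = some d → p.2 = d) ∧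
      t = (((C.scope.map α).zip s).filter (fun p => p.1.isNone)).map Prod.snd} := by
  simp only [restrictC, List.zip_map_left, List.forall_mem_map, List.filter_map, List.map_map,
    List.length_map]
  rfl

theorem inLang_restrictC_iff {Γ : Language D} {C : CSPConstraint V D} {C' : CSPConstraint V' D}
    {α : V → Option D} {α' : V' → Option D} (hmap : C.scope.map α = C'.scope.map α')
    (hrel : C.rel = C'.rel) : inLang Γ (restrictC C α) ↔ inLang Γ (restrictC C' α') := by
  simp only [inLang, restrictC_scope_length, restrictC_rel, hmap, hrel]

-- `ClosedLang` only speaks about constraints over `ℕ`: rename the scope to `0, …, n - 1`.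
theorem ClosedLang.inLang_restrictC {Γ : Language D} (hΓ : ClosedLang Γ)
    {C : CSPConstraint V D} (hC : inLang Γ C) (α : V → Option D) :
    inLang Γ (restrictC C α) := by
  let C' : CSPConstraint ℕ D := ⟨List.range C.scope.length, C.rel⟩
  have hmap : C.scope.map α = C'.scope.map (fun n => C.scope[n]?.bind α) := by
    refine List.ext_getElem (by simp [C']) fun i hi _ => ?_
    rw [List.length_map] at hi
    simp [C', List.getElem?_eq_getElem hi]
  rw [inLang_restrictC_iff hmap rfl]
  exact hΓ C' _ (by simpa [inLang, C'] using hC)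

theorem restrictC_congr (C : CSPConstraint V D) {α β : V → Option D}
    (h : ∀ v ∈ C.scope, α v = β v) : restrictC C α = restrictC C β := by
  have hmap : C.scope.map α = C.scope.map β := List.map_congr_left h
  ext1
  · exact List.filter_congr fun v hv => by rw [h v hv]
  · rw [restrictC_rel, restrictC_rel, hmap]

theorem restrictC_restrictC (C : CSPConstraint V D) (α β : V → Option D) :
    restrictC (restrictC C α) β = restrictC C (fun v => (α v).or (β v)) := by
  ext1
  · show (C.scope.filter _).filter _ = C.scope.filter _
    rw [List.filter_filter]
    exact List.filter_congr fun v _ => by rw [Option.isNone_or, Bool.and_comm]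
  · ext t
    have hzip (s : List D) (hlen : s.length = C.scope.length) :
        (restrictC C α).scope.zip
          (((C.scope.zip s).filter (fun p => (α p.1).isNone)).map Prod.snd)
          = (C.scope.zip s).filter (fun p => (α p.1).isNone) :=
      List.zip_filter_map_snd _ hlen.symm.le
    have hfilter (s : List D) :
        ((C.scope.zip s).filter (fun p => (α p.1).isNone)).filter (fun p => (β p.1).isNone)
          = (C.scope.zip s).filter (fun p => ((α p.1).or (β p.1)).isNone) := by
      rw [List.filter_filter]
      exact List.filter_congr fun q _ => by rw [Option.isNone_or, Bool.and_comm]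
    constructor
    · rintro ⟨s', ⟨s, hs, hlen, hc, rfl⟩, -, hc', rfl⟩
      refine ⟨s, hs, hlen, fun p hp d hd => ?_, by rw [hzip s hlen, hfilter]⟩
      rcases Option.or_eq_some_iff.mp hd with hα | ⟨hα, hβ⟩
      · exact hc p hp d hα
      · refine hc' p ?_ d hβ
        rw [hzip s hlen]
        exact List.mem_filter.mpr ⟨hp, by simp [hα]⟩
    · rintro ⟨s, hs, hlen, hc, rfl⟩
      refine ⟨_, ⟨s, hs, hlen, fun p hp d hd => hc p hp d (by simp [hd]), rfl⟩, ?_,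
        fun p hp d hd => ?_, by rw [hzip s hlen, hfilter]⟩
      · rw [List.length_map, ← List.length_map (f := Prod.fst),
          List.map_fst_filter_zip (fun v => (α v).isNone) hlen.symm.le]
        rfl
      · rw [hzip s hlen] at hp
        obtain ⟨hp, hpα⟩ := List.mem_filter.mp hp
        exact hc p hp d (by simp_all)

theorem restrictI_congr {J : Set (CSPConstraint V D)} {α β : V → Option D}
    (h : ∀ C ∈ J, ∀ v ∈ C.scope, α v = β v) : restrictI J α = restrictI J β :=
  Set.image_congr fun C hC => restrictC_congr C (h C hC)

theorem restrictI_restrictI (J : Set (CSPConstraint V D)) (α β : V → Option D) :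
    restrictI (restrictI J α) β = restrictI J (fun v => (α v).or (β v)) := by
  simp only [restrictI, Set.image_image, restrictC_restrictC]

theorem restrictI_mono {J K : Set (CSPConstraint V D)} (h : J ⊆ K) (α : V → Option D) :
    restrictI J α ⊆ restrictI K α :=
  Set.image_mono h

theorem restrictI_union (J K : Set (CSPConstraint V D)) (α : V → Option D) :
    restrictI (J ∪ K) α = restrictI J α ∪ restrictI K α :=
  Set.image_union _ _ _

section Scattered

variable {d : ℕ} {Γ : Fin d → Language D} {J K : Set (CSPConstraint V D)}

theorem Scattered.mono (hK : Scattered Γ K) (h : J ⊆ K) : Scattered Γ J := by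
  intro C hC
  obtain ⟨i, hi⟩ := hK C (h hC)
  refine ⟨i, fun C' hC' hcomp => hi C' (h hC') ?_⟩
  exact Relation.ReflTransGen.mono (fun _ _ ⟨h₁, h₂, hv⟩ => ⟨h h₁, h h₂, hv⟩) _ _ hcomp

theorem Scattered.restrictI (hclosed : ∀ i, ClosedLang (Γ i)) (hJ : Scattered Γ J)
    (β : V → Option D) : Scattered Γ (restrictI J β) := by
  rintro _ ⟨E, hE, rfl⟩
  obtain ⟨i, hi⟩ := hJ E hE
  refine ⟨i, ?_⟩
  rintro C' - hcomp
  suffices ∃ E' ∈ J, C' = restrictC E' β ∧ SameComp J ∅ E E' by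
    obtain ⟨E', hE', rfl, hsc⟩ := this
    exact (hclosed i).inLang_restrictC (hi E' hE' hsc) β
  induction hcomp with
  | refl => exact ⟨E, hE, rfl, .refl⟩
  | tail _ hlink ih =>
    obtain ⟨E₁, hE₁, rfl, hsc₁⟩ := ih
    obtain ⟨-, ⟨E₂, hE₂, rfl⟩, u, -, hu₁, hu₂⟩ := hlink
    exact ⟨E₂, hE₂, rfl, hsc₁.tail
      ⟨hE₁, hE₂, u, Set.notMem_empty u, List.mem_of_mem_filter hu₁, List.mem_of_mem_filter hu₂⟩⟩

theorem sameComp_union_left (hsep : ∀ C₁ ∈ J, ∀ C₂ ∈ K, ∀ v ∈ C₁.scope, v ∉ C₂.scope)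
    {C C' : CSPConstraint V D} (hC : C ∈ J) (h : SameComp (J ∪ K) ∅ C C') :
    C' ∈ J ∧ SameComp J ∅ C C' := by
  induction h with
  | refl => exact ⟨hC, .refl⟩
  | tail _ hlink ih =>
    obtain ⟨hC₁, hsc⟩ := ih
    obtain ⟨-, hC₂, v, hv, hv₁, hv₂⟩ := hlink
    have hC₂J : _ ∈ J := hC₂.resolve_right fun hK => hsep _ hC₁ _ hK v hv₁ hv₂
    exact ⟨hC₂J, hsc.tail ⟨hC₁, hC₂J, v, hv, hv₁, hv₂⟩⟩

theorem Scattered.union (hJ : Scattered Γ J) (hK : Scattered Γ K)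
    (hsep : ∀ C₁ ∈ J, ∀ C₂ ∈ K, ∀ v ∈ C₁.scope, v ∉ C₂.scope) : Scattered Γ (J ∪ K) := by
  rintro C (hC | hC)
  · obtain ⟨i, hi⟩ := hJ C hC
    refine ⟨i, fun C' _ h => ?_⟩
    obtain ⟨h₁, h₂⟩ := sameComp_union_left hsep hC h
    exact hi C' h₁ h₂
  · obtain ⟨i, hi⟩ := hK C hC
    refine ⟨i, fun C' _ h => ?_⟩
    rw [Set.union_comm] at h
    obtain ⟨h₁, h₂⟩ := sameComp_union_left
      (fun C₂ h₂ C₁ h₁ v hv₂ hv₁ => hsep C₁ h₁ C₂ h₂ v hv₁ hv₂) hC h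
    exact hi C' h₁ h₂

end Scattered

open Classical in
noncomputable def fillOn (α : V → Option D) (T : Set V) (d : D) : V → Option D :=
  fun v => if v ∈ T then some ((α v).getD d) else none

theorem onSet_fillOn (α : V → Option D) (T : Set V) (d : D) : OnSet (fillOn α T d) T :=
  fun v => by by_cases h : v ∈ T <;> simp [fillOn, h]

theorem fillOn_apply_eq {α : V → Option D} {A T : Set V} (hα : OnSet α A) {v : V}
    (h : v ∈ T ↔ v ∈ A) (d : D) : fillOn α T d v = α v := by
  by_cases hv : v ∈ T
  · obtain ⟨a, ha⟩ := Option.isSome_iff_exists.mp ((hα v).mpr (h.mp hv))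
    simp [fillOn, hv, ha]
  · have hnone : α v = none :=
      Option.not_isSome_iff_eq_none.mp fun hs => hv (h.mpr ((hα v).mp hs))
    simp [fillOn, hv, hnone]

theorem fillOn_or_self {α : V → Option D} {A T : Set V} (hα : OnSet α A) {v : V}
    (h : v ∈ T → v ∈ A) (d : D) : (fillOn α T d v).or (α v) = α v := by
  by_cases hv : v ∈ T
  · rw [fillOn_apply_eq hα (iff_of_true hv (h hv)), Option.or_self]
  · simp [fillOn, hv]

/-- The sub-instance `I[Y]` of the constraints whose scope lies in `Y`. -/
def Induced (I : Set (CSPConstraint V D)) (Y : Set V) : Set (CSPConstraint V D) :=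
  {C | C ∈ I ∧ ∀ v ∈ C.scope, v ∈ Y}

section Backdoor

variable [Nonempty D] {d : ℕ} {Γ : Fin d → Language D} {I : Set (CSPConstraint V D)}
  {Z : Set V}

theorem StrongBackdoor.induced_inter (hZ : StrongBackdoor Γ I Z) (Y : Set V) :
    StrongBackdoor Γ (Induced I Y) (Z ∩ Y) := by
  obtain ⟨d₀⟩ := ‹Nonempty D›
  intro α hα
  have hagree : ∀ C ∈ Induced I Y, ∀ v ∈ C.scope, α v = fillOn α Z d₀ v := fun C hC v hv =>
    (fillOn_apply_eq hα (by simp [hC.2 v hv]) d₀).symm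
  rw [restrictI_congr hagree]
  exact (hZ _ (onSet_fillOn α Z d₀)).mono (restrictI_mono (fun C hC => hC.1) _)

theorem StrongBackdoor.diff_inter_union (hclosed : ∀ i, ClosedLang (Γ i)) {R S Z'' : Set V}
    (hR : ∀ C ∈ I, ∀ v ∈ C.scope, v ∈ R → C ∈ Induced I (R ∪ S))
    (hZ : StrongBackdoor Γ I Z) (hSZ'' : S ⊆ Z'')
    (hZ'' : StrongBackdoor Γ (Induced I (R ∪ S)) Z'') :
    StrongBackdoor Γ I (Z \ (Z ∩ (R ∪ S)) ∪ Z'') := by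
  obtain ⟨d₀⟩ := ‹Nonempty D›
  set J := Induced I (R ∪ S)
  intro α hα
  have hsplit : restrictI I α = restrictI J α ∪ restrictI (I \ J) α := by
    rw [← restrictI_union, Set.union_sdiff_cancel fun C hC => hC.1]
  rw [hsplit]
  refine Scattered.union ?inside ?outside ?separated
  case inside =>
    have hagree : ∀ C ∈ J, ∀ v ∈ C.scope, α v = fillOn α Z'' d₀ v := fun C hC v hv =>
      (fillOn_apply_eq hα (by simp [hC.2 v hv]) d₀).symm
    rw [restrictI_congr hagree]
    exact hZ'' _ (onSet_fillOn α Z'' d₀)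
  case outside =>
    have hagree : ∀ C ∈ I \ J, ∀ v ∈ C.scope, α v = (fillOn α Z d₀ v).or (α v) := by
      refine fun C hC v hv => (fillOn_or_self hα (fun hvZ => ?_) d₀).symm
      by_cases hvS : v ∈ S
      · exact Or.inr (hSZ'' hvS)
      · have hvR : v ∉ R := fun hvR => hC.2 (hR C hC.1 v hv hvR)
        exact Or.inl ⟨hvZ, by simp [hvR, hvS]⟩
    rw [restrictI_congr hagree, ← restrictI_restrictI]
    exact ((hZ _ (onSet_fillOn α Z d₀)).mono (restrictI_mono Set.sdiff_subset _)).restrictI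
      hclosed α
  case separated =>
    rintro _ ⟨C₁, hC₁, rfl⟩ _ ⟨C₂, hC₂, rfl⟩ v hv₁ hv₂
    obtain ⟨hv₁, hαv⟩ := List.mem_filter.mp hv₁
    have hnone : α v = none := by simpa using hαv
    have hvS : v ∉ S := fun hvS => by simpa [hnone] using (hα v).mpr (Or.inr (hSZ'' hvS))
    have hvR : v ∈ R := (hC₁.2 v hv₁).resolve_right hvS
    exact hC₂.2 (hR C₂ hC₂.1 v (List.mem_of_mem_filter hv₂) hvR)

end Backdoor

section Region

variable {I : Set (CSPConstraint V D)} {S W₁ : Set V}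

theorem inl_mem_region_empty_iff {v : V} :
    Sum.inl v ∈ Region I S W₁ ∅ ↔ v ∈ VReg I S W₁ := by
  simp only [Region, RSet, VReg, Set.union_empty, Set.mem_ofPred_eq, Set.exists_mem_image]

theorem subInst_empty_eq_induced : SubInst I S W₁ ∅ = Induced I (VReg I S W₁ ∪ S) := by
  ext C
  simp only [SubInst, Induced, Set.mem_empty_iff_false, false_or,
    inl_mem_region_empty_iff, Set.mem_union, or_comm]

theorem mem_induced_of_mem_vReg {C : CSPConstraint V D} {u : V} (hC : C ∈ I)
    (hu : u ∈ C.scope) (huV : u ∈ VReg I S W₁) : C ∈ Induced I (VReg I S W₁ ∪ S) := by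
  refine ⟨hC, fun w hw => ?_⟩
  by_cases hwS : w ∈ S
  · exact Or.inr hwS
  · left
    obtain ⟨w₀, hw₀, h₁, h₂, hchain⟩ := huV
    have hCnot : (Sum.inr C : V ⊕ CSPConstraint V D) ∉ Sum.inl '' S := by
      rintro ⟨s, -, hs⟩
      exact Sum.inl_ne_inr hs
    have hwnot : (Sum.inl w : V ⊕ CSPConstraint V D) ∉ Sum.inl '' S := by
      rintro ⟨s, hsS, hs⟩
      exact hwS (Sum.inl_injective hs ▸ hsS)
    exact ⟨w₀, hw₀, h₁, hwnot,
      (hchain.tail ⟨⟨u, C, hC, hu, Or.inl ⟨rfl, rfl⟩⟩, h₂, hCnot⟩).tail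
        ⟨⟨w, C, hC, hw, Or.inr ⟨rfl, rfl⟩⟩, hCnot, hwnot⟩⟩

end Region

end CSP

theorem stmt16_general {V D : Type} [Nonempty D] {d k : ℕ} (Γ : Fin d → CSP.Language D)
    (hclosed : ∀ i, CSP.ClosedLang (Γ i))
    (I : Set (CSPConstraint V D)) (S W₁ W₂ Z : Set V)
    (hsol : CSP.Solution Γ I k S (W₁ ∪ W₂) Z) :
    CSP.StrongBackdoor Γ (CSP.SubInst I S W₁ ∅) (Z ∩ (VReg I S W₁ ∪ S)) ∧
    ∀ Z'' : Set V, S ⊆ Z'' → Z''.Finite → Disjoint Z'' (W₁ ∪ W₂) →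
      Z''.ncard ≤ (Z ∩ (VReg I S W₁ ∪ S)).ncard →
      CSP.StrongBackdoor Γ (CSP.SubInst I S W₁ ∅) Z'' →
      CSP.Solution Γ I k S (W₁ ∪ W₂) ((Z \ (Z ∩ (VReg I S W₁ ∪ S))) ∪ Z'') := by
  obtain ⟨-, hdisj, hZfin, hZk, hZbd⟩ := hsol
  rw [CSP.subInst_empty_eq_induced]
  refine ⟨hZbd.induced_inter _, fun Z'' hSZ'' hfin'' hdisj'' hcard'' hbd'' =>
    ⟨hSZ''.trans Set.subset_union_right, ?_, hZfin.sdiff.union hfin'', ?_, ?_⟩⟩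
  · exact Set.disjoint_union_left.mpr ⟨hdisj.mono_left Set.sdiff_subset, hdisj''⟩
  · calc _ ≤ (Z \ (Z ∩ (VReg I S W₁ ∪ S))).ncard + Z''.ncard := Set.ncard_union_le _ _
      _ ≤ (Z \ (Z ∩ (VReg I S W₁ ∪ S))).ncard + (Z ∩ (VReg I S W₁ ∪ S)).ncard := by gcongr
      _ = Z.ncard := Set.ncard_sdiff_add_ncard_of_subset Set.inter_subset_left hZfin
      _ ≤ k := hZk
  · exact hZbd.diff_inter_union hclosed (fun _ hC _ => CSP.mem_induced_of_mem_vReg hC) hSZ'' hbd''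

/-- if `S` already disconnects `W₁` from `W₂`, then `Z' = Z ∩ R_B[W₁,S]`
is a strong backdoor of the sub-instance `I[R_B[W₁,S]]`, and conversely replacing `Z'`
by any strong backdoor `Z''` of the sub-instance of size at most `|Z'|` containing `S`
yields a solution of the original instance. -/
theorem stmt16 {V D : Type} [Nonempty D] {d k : ℕ} (Γ : Fin d → CSP.Language D)
    (hfin : ∀ i, (Γ i).Finite) (hclosed : ∀ i, CSP.ClosedLang (Γ i))
    (hD2 : ∀ i, (2, {t : List D | t.length = 2}) ∈ Γ i)
    (I : Set (CSPConstraint V D)) (S W₁ W₂ Z : Set V)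
    (hSsep : ∀ w₁ ∈ W₁, ∀ w₂ ∈ W₂,
      ¬ CSP.ReachAvoid (CSP.incGraph I) (Sum.inl '' S) (Sum.inl w₁) (Sum.inl w₂))
    (hsol : CSP.Solution Γ I k S (W₁ ∪ W₂) Z) :
    CSP.StrongBackdoor Γ (CSP.SubInst I S W₁ ∅) (Z ∩ (VReg I S W₁ ∪ S)) ∧
    ∀ Z'' : Set V, S ⊆ Z'' → Z''.Finite → Disjoint Z'' (W₁ ∪ W₂) →
      Z''.ncard ≤ (Z ∩ (VReg I S W₁ ∪ S)).ncard →
      CSP.StrongBackdoor Γ (CSP.SubInst I S W₁ ∅) Z'' →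
      CSP.Solution Γ I k S (W₁ ∪ W₂) ((Z \ (Z ∩ (VReg I S W₁ ∪ S))) ∪ Z'') :=
  stmt16_general Γ hclosed I S W₁ W₂ Z hsol
end
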